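/- Let E be the elliptic curve over ℂ(u) defined by Y² = X³ − 2(u³ − 2)X² + u⁶X. Then the point P = (u³, 2u³) lies on E and has order exactly 4 in the group of ℂ(u)-rational points; in particular 2P = (0, 0), which is a point of order 2. -/

import Mathlib

/-! On `Y² = X³ + aX² + c²X` a point `P = (c, y)` satisfies `y² = c²(2c + a)`, so the tangent
at `P` has slope `y / c` and meets the curve again at `(0, 0)`. That point is its own negative,
so `2P = (0, 0)` has order `2` and `P` has order `4`. Here `c = u³` and `a = −2(u³ − 2)`. -/

open WeierstrassCurve

/-- The parameter `u` of the base `ℙ¹`, as an element of `ℂ(u)`. -/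
noncomputable def uu : RatFunc ℂ := RatFunc.X

/-- Fibration 6: the elliptic curve `Y² = X³ − 2(u³ − 2)X² + u⁶X` over `ℂ(u)`. -/
noncomputable def W6 : WeierstrassCurve.Affine (RatFunc ℂ) :=
  { a₁ := 0, a₂ := -2 * (uu ^ 3 - 2), a₃ := 0, a₄ := uu ^ 6, a₆ := 0 }

lemma addOrderOf_eq_four_of_addOrderOf_two_nsmul {G : Type*} [AddMonoid G] {x : G}
    (h : addOrderOf (2 • x) = 2) : addOrderOf x = 4 := by
  have h2x : 2 • x ≠ 0 := fun h0 => by simp [h0] at h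
  have h4x : 2 ^ 2 • x = 0 := by
    rw [pow_two, mul_nsmul]
    nth_rewrite 1 [← h]
    exact addOrderOf_nsmul_eq_zero _
  exact addOrderOf_eq_prime_pow (p := 2) (n := 1) (by simpa using h2x) h4x

namespace WeierstrassCurve.Affine

variable {F : Type*} [Field F] [DecidableEq F] {W : Affine F}

lemma addOrderOf_some_of_Y_eq_negY {x y : F} (h : W.Nonsingular x y) (hy : y = W.negY x y) :
    addOrderOf (Point.some _ _ h) = 2 :=
  addOrderOf_eq_prime (by rw [two_nsmul]; exact Point.add_self_of_Y_eq hy) (Point.some_ne_zero h)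

lemma two_nsmul_some_eq_some_zero_zero [NeZero (2 : F)] {c y : F}
    (h₁ : W.a₁ = 0) (h₃ : W.a₃ = 0) (h₄ : W.a₄ = c ^ 2) (h₆ : W.a₆ = 0)
    (hP : W.Nonsingular c y) (hT : W.Nonsingular 0 0) (hy : y ≠ 0) :
    2 • Point.some _ _ hP = Point.some _ _ hT := by
  have heq := (equation_iff c y).mp hP.1
  rw [h₁, h₃, h₄, h₆] at heq
  have hc : c ≠ 0 := by
    rintro rfl
    exact hy (pow_eq_zero_iff two_ne_zero |>.mp (by simpa using heq))
  have h2y : 2 * y ≠ 0 := mul_ne_zero two_ne_zero hy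
  have hyneg : y ≠ W.negY c y := by
    rw [negY, h₁, h₃]
    exact fun h => h2y (by linear_combination h)
  have hslope : W.slope c c y y = y / c := by
    rw [slope_of_Y_ne rfl hyneg, negY, h₁, h₃, h₄, div_eq_div_iff _ hc]
    · linear_combination (-2 : F) * heq
    · exact fun h => h2y (by linear_combination h)
  have hX : W.addX c c (W.slope c c y y) = 0 := by
    rw [hslope, addX, h₁]
    field_simp
    linear_combination heq
  have hY : W.addY c c y (W.slope c c y y) = 0 := by
    rw [addY, negAddY, hX, hslope, negY, h₁, h₃]
    field_simp
    ring
  rw [two_nsmul, Point.add_self_of_Y_ne hyneg, Point.some.injEq]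
  exact ⟨hX, hY⟩

end WeierstrassCurve.Affine

open WeierstrassCurve.Affine

lemma W6_nonsingular_P : W6.Nonsingular (uu ^ 3) (2 * uu ^ 3) := by
  have hu : (uu ^ 3 : RatFunc ℂ) ≠ 0 := pow_ne_zero _ RatFunc.X_ne_zero
  refine (nonsingular_iff _ _).mpr ⟨(equation_iff _ _).mpr ?_, Or.inr ?_⟩
  · simp only [W6]
    ring
  · simp only [W6]
    intro h
    exact hu (by linear_combination h / 4)

lemma W6_nonsingular_zero_zero : W6.Nonsingular 0 0 :=
  nonsingular_zero.mpr ⟨rfl, Or.inr (pow_ne_zero _ RatFunc.X_ne_zero)⟩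

open scoped Classical in
/-- The point `P = (u³, 2u³)` lies on the curve `Y² = X³ − 2(u³ − 2)X² + u⁶X`
over `ℂ(u)` and has order exactly 4; in particular `2P = (0, 0)`, a point of
order 2. -/
theorem fibration6_four_torsion :
    ∃ hP : W6.Nonsingular (uu ^ 3) (2 * uu ^ 3),
      addOrderOf (WeierstrassCurve.Affine.Point.some _ _ hP) = 4 ∧
      ∃ hT : W6.Nonsingular 0 0,
        (2 : ℤ) • WeierstrassCurve.Affine.Point.some _ _ hP =
          WeierstrassCurve.Affine.Point.some _ _ hT ∧
        addOrderOf (WeierstrassCurve.Affine.Point.some _ _ hT) = 2 := by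
  have h2P : 2 • Point.some _ _ W6_nonsingular_P = Point.some _ _ W6_nonsingular_zero_zero :=
    two_nsmul_some_eq_some_zero_zero rfl rfl (by simp only [W6]; ring) rfl _ _
      (mul_ne_zero two_ne_zero (pow_ne_zero _ RatFunc.X_ne_zero))
  have hT_order : addOrderOf (Point.some _ _ W6_nonsingular_zero_zero) = 2 :=
    addOrderOf_some_of_Y_eq_negY _ (by simp [negY, W6])
  refine ⟨W6_nonsingular_P, ?_, W6_nonsingular_zero_zero, ?_, hT_order⟩
  · exact addOrderOf_eq_four_of_addOrderOf_two_nsmul (h2P ▸ hT_order)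
  · rw [two_zsmul, ← two_nsmul, h2P]
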